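/- arXiv:2507.08463 — 6 statements merged into one kernel-verified Lean document; each statement's English description precedes it below -/
import Mathlib

section
/- Let M be a matching in a graph G and let p be an augmenting path for M. Then the symmetric difference of M with the edge set of p (i.e., the result of flipping p) is again a matching in G. -/
/-! The flipped set consists of the matching edges off the path and the path edges of even
index. The latter are pairwise disjoint because the path is simple. A matching edge off the
path cannot touch it at all: the endpoints are uncovered, and every inner vertex is already
matched by the path edge of odd index at it. -/

variable {V : Type*}

/-- The list of edges of a path given by its list of vertices. -/
def pathEdges (p : List V) : List (Sym2 V) :=
  List.zipWith (fun a b => s(a, b)) p p.tail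

/-- `M` is a matching in `G`: a set of edges of `G` no two of which share a vertex. -/
def IsMatching (G : SimpleGraph V) (M : Set (Sym2 V)) : Prop :=
  M ⊆ G.edgeSet ∧ ∀ e ∈ M, ∀ f ∈ M, e ≠ f → ∀ v : V, v ∈ e → v ∉ f

/-- A vertex is covered by `M` if it is incident with some edge of `M`. -/
def Covered (M : Set (Sym2 V)) (v : V) : Prop :=
  ∃ e ∈ M, v ∈ e

/-- `p` (a list of vertices) is an augmenting path for the matching `M` in `G`:
a simple path whose edges alternate out of/in `M` (starting and ending with a
non-matching edge, so it has an odd number of edges, i.e. an even number of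
vertices) and whose endpoints are uncovered by `M`. -/
def IsAugPath (G : SimpleGraph V) (M : Set (Sym2 V)) (p : List V) : Prop :=
  p.Nodup ∧ p.Chain' G.Adj ∧ 2 ≤ p.length ∧ p.length % 2 = 0 ∧
  (∀ (i : ℕ) (h : i < (pathEdges p).length),
      ((pathEdges p).get ⟨i, h⟩ ∈ M ↔ i % 2 = 1)) ∧
  (∀ v : V, p.head? = some v ∨ p.getLast? = some v → ¬ Covered M v)

section pathEdges

variable {p : List V}

lemma length_pathEdges (p : List V) : (pathEdges p).length = p.length - 1 := by
  simp [pathEdges]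

lemma getElem_pathEdges {i : ℕ} (h : i + 1 < p.length) :
    (pathEdges p)[i]'(by rw [length_pathEdges]; omega) = s(p[i], p[i + 1]) := by
  simp only [pathEdges, List.getElem_zipWith, List.getElem_tail]

lemma mem_pathEdges_iff {e : Sym2 V} :
    e ∈ pathEdges p ↔ ∃ i, ∃ h : i + 1 < p.length, e = s(p[i], p[i + 1]) := by
  rw [List.mem_iff_getElem]
  constructor
  · rintro ⟨i, hi, rfl⟩
    have hi' : i + 1 < p.length := by rw [length_pathEdges] at hi; omega
    exact ⟨i, hi', getElem_pathEdges hi'⟩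
  · rintro ⟨i, hi, rfl⟩
    exact ⟨i, by rw [length_pathEdges]; omega, getElem_pathEdges hi⟩

lemma mem_edgeSet_of_mem_pathEdges {G : SimpleGraph V} (hG : p.IsChain G.Adj) {e : Sym2 V}
    (he : e ∈ pathEdges p) : e ∈ G.edgeSet := by
  obtain ⟨i, hi, rfl⟩ := mem_pathEdges_iff.mp he
  exact List.isChain_iff_getElem.mp hG i hi

lemma List.Nodup.eq_of_mem_edge_of_mem_edge (hp : p.Nodup) {i j : ℕ}
    (hi : i + 1 < p.length) (hj : j + 1 < p.length) (hij : i % 2 = j % 2) {v : V}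
    (hvi : v ∈ s(p[i], p[i + 1])) (hvj : v ∈ s(p[j], p[j + 1])) : i = j := by
  rw [Sym2.mem_iff] at hvi hvj
  rcases hvi with rfl | rfl <;> rcases hvj with h | h <;>
    have := (hp.getElem_inj_iff).mp h <;> omega

end pathEdges

namespace IsAugPath

variable {G : SimpleGraph V} {M : Set (Sym2 V)} {p : List V}

lemma edge_mem_iff_odd (hp : IsAugPath G M p) {i : ℕ} (hi : i + 1 < p.length) :
    s(p[i], p[i + 1]) ∈ M ↔ i % 2 = 1 := by
  have := hp.2.2.2.2.1 i (by rw [length_pathEdges]; omega)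
  rwa [List.get_eq_getElem, getElem_pathEdges hi] at this

lemma exists_even_of_mem_pathEdges_of_notMem (hp : IsAugPath G M p) {e : Sym2 V}
    (heP : e ∈ pathEdges p) (heM : e ∉ M) :
    ∃ i, ∃ hi : i + 1 < p.length, i % 2 = 0 ∧ e = s(p[i], p[i + 1]) := by
  obtain ⟨i, hi, rfl⟩ := mem_pathEdges_iff.mp heP
  exact ⟨i, hi, by have := mt (hp.edge_mem_iff_odd hi).mpr heM; omega, rfl⟩

lemma not_covered_head (hp : IsAugPath G M p) (h : 0 < p.length) : ¬ Covered M p[0] :=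
  hp.2.2.2.2.2 _ (Or.inl (by simp [List.head?_eq_getElem?, h]))

lemma not_covered_getLast (hp : IsAugPath G M p) (h : 0 < p.length) :
    ¬ Covered M p[p.length - 1] :=
  hp.2.2.2.2.2 _ (Or.inr (by simp [List.getLast?_eq_getElem?, h]))

lemma exists_matched_edge (hp : IsAugPath G M p) {k : ℕ} (hk0 : 0 < k)
    (hk : k + 1 < p.length) : ∃ f ∈ M, f ∈ pathEdges p ∧ p[k] ∈ f := by
  rcases Nat.even_or_odd k with hk2 | hk2
  · have hk' : k - 1 + 1 < p.length := by omega
    refine ⟨_, (hp.edge_mem_iff_odd hk').mpr (by grind), mem_pathEdges_iff.mpr ⟨_, hk', rfl⟩, ?_⟩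
    simp only [Nat.sub_add_cancel hk0, Sym2.mem_mk_right]
  · exact ⟨_, (hp.edge_mem_iff_odd hk).mpr (Nat.odd_iff.mp hk2),
      mem_pathEdges_iff.mpr ⟨_, hk, rfl⟩, Sym2.mem_mk_left _ _⟩

lemma mem_pathEdges_of_mem (hp : IsAugPath G M p) (hM : IsMatching G M) {e : Sym2 V}
    (he : e ∈ M) {k : ℕ} (hk : k < p.length) (hke : p[k] ∈ e) : e ∈ pathEdges p := by
  rcases Nat.eq_zero_or_pos k with rfl | hk0
  · exact absurd ⟨e, he, hke⟩ (hp.not_covered_head hk)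
  rcases (by omega : k = p.length - 1 ∨ k + 1 < p.length) with rfl | hk'
  · exact absurd ⟨e, he, hke⟩ (hp.not_covered_getLast (by omega))
  obtain ⟨f, hfM, hfP, hkf⟩ := hp.exists_matched_edge hk0 hk'
  by_contra heP
  exact hM.2 e he f hfM (fun h => heP (h ▸ hfP)) _ hke hkf

end IsAugPath

/-- Flipping an augmenting path of a matching yields a matching. -/
theorem flip_augPath_isMatching (G : SimpleGraph V) (M : Set (Sym2 V))
    (hM : IsMatching G M) (p : List V) (hp : IsAugPath G M p) :
    IsMatching G (symmDiff M {e | e ∈ pathEdges p}) := by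
  have off_path : ∀ e ∈ M, e ∉ pathEdges p → ∀ f ∈ pathEdges p, ∀ v ∈ e, v ∉ f := by
    intro e he heP f hf v hve hvf
    obtain ⟨i, hi, rfl⟩ := mem_pathEdges_iff.mp hf
    rcases Sym2.mem_iff.mp hvf with rfl | rfl
    exacts [heP (hp.mem_pathEdges_of_mem hM he (by omega) hve),
      heP (hp.mem_pathEdges_of_mem hM he hi hve)]
  refine ⟨fun e he => ?_, fun e he f hf hne v hve hvf => ?_⟩
  · rcases Set.mem_symmDiff.mp he with ⟨heM, -⟩ | ⟨heP, -⟩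
    exacts [hM.1 heM, mem_edgeSet_of_mem_pathEdges hp.2.1 heP]
  rcases Set.mem_symmDiff.mp he with ⟨heM, heP⟩ | ⟨heP, heM⟩ <;>
    rcases Set.mem_symmDiff.mp hf with ⟨hfM, hfP⟩ | ⟨hfP, hfM⟩
  · exact hM.2 e heM f hfM hne v hve hvf
  · exact off_path e heM heP f hfP v hve hvf
  · exact off_path f hfM hfP e heP v hvf hve
  · obtain ⟨i, hi, hie, rfl⟩ := hp.exists_even_of_mem_pathEdges_of_notMem heP heM
    obtain ⟨j, hj, hje, rfl⟩ := hp.exists_even_of_mem_pathEdges_of_notMem hfP hfM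
    obtain rfl := hp.1.eq_of_mem_edge_of_mem_edge hi hj (by omega) hve hvf
    exact hne rfl
end

section
/- Let G be a finite k-regular bipartite graph, k ≥ 2, and let m be a positive integer. Choose K odd with m ≤ ((k+1)/k)(1 + (K−1)/(2k)). If M is a matching in G with no augmenting paths of length ≤ K, then the set Y_0 of M-uncovered vertices satisfies m·|Y_0| ≤ |A ∪ B|, i.e., the number of uncovered vertices is at most |V|/m. -/
variable {V : Type*}

open scoped Classical

/-- Graph neighbourhood of a finite set of vertices. -/
noncomputable def NG [Fintype V] (G : SimpleGraph V) (S : Finset V) : Finset V :=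
  Finset.univ.filter fun v => ∃ u ∈ S, G.Adj u v

/-- Set of `M`-partners of a finite set of vertices. -/
noncomputable def NM [Fintype V] (M : Set (Sym2 V)) (S : Finset V) : Finset V :=
  Finset.univ.filter fun v => ∃ u ∈ S, s(u, v) ∈ M

/-- The set of vertices not covered by `M`. -/
noncomputable def uncov [Fintype V] (M : Set (Sym2 V)) : Finset V :=
  Finset.univ.filter fun v => ¬ Covered M v

/-- The sequence `Y_0 = ` uncovered vertices, `Y_i = N_G(Y_{i-1})` for odd `i`,
`Y_i = N_M(Y_{i-1})` for even `i > 0`. -/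
noncomputable def Ychain [Fintype V] (G : SimpleGraph V) (M : Set (Sym2 V)) : ℕ → Finset V
  | 0 => uncov M
  | i + 1 => if (i + 1) % 2 = 1 then NG G (Ychain G M i) else NM M (Ychain G M i)

/-!
Fix a side `A` of the bipartition, let `U` be its uncovered vertices and let `R` be the set of
endpoints in `A` of short alternating walks starting in `U`. If no short augmenting path exists,
every neighbour of `R` is covered, so `|R| ≤ |N(R)| ≤ |N_M(N(R))|` by regularity and by
injectivity of the matching. The covered set `N_M(N(R))` is disjoint from `U`, so lengthening the
walks by two edges adds `|U|` vertices to `R`. Without augmenting paths of at most `K` edges this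
can be repeated `(K-1)/2` times, so `((K+1)/2)|U| ≤ |A|`; it remains to sum over both sides and to
note that the assumed bound on `m` is at most `(K+1)/2`. A walk between uncovered vertices is
shortened to an augmenting path by cutting out closed subwalks.
-/

open Finset

namespace List

theorem IsChain.exists_nodup {α : Type*} {R : α → α → Prop} :
    ∀ {l : List α}, l.IsChain R → ∃ l' : List α, l'.Nodup ∧ l'.IsChain R ∧
      l'.head? = l.head? ∧ l'.getLast? = l.getLast? ∧ l'.length ≤ l.length
  | [], _ => ⟨[], nodup_nil, .nil, rfl, rfl, le_rfl⟩
  | x :: l, h => by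
    obtain ⟨hx, hl⟩ := List.isChain_cons.mp h
    obtain ⟨l', hnd, hch, hhead, hlast, hlen⟩ := hl.exists_nodup
    by_cases hmem : x ∈ l'
    · obtain ⟨a, c, rfl⟩ := append_of_mem hmem
      refine ⟨x :: c, hnd.of_append_right, hch.right_of_append, rfl, ?_, ?_⟩
      · simp [getLast?_cons, ← hlast]
      · simp only [length_append, length_cons] at hlen ⊢
        omega
    · have hcons : (x :: l').IsChain R := List.isChain_cons.mpr ⟨hhead ▸ hx, hch⟩
      exact ⟨x :: l', nodup_cons.mpr ⟨hmem, hnd⟩, hcons, rfl, by simp [getLast?_cons, hlast],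
        by simpa using hlen⟩

end List

theorem IsMatching.eq_of_mem {G : SimpleGraph V} {M : Set (Sym2 V)} (hM : IsMatching G M)
    {u v w : V} (hu : s(u, w) ∈ M) (hv : s(v, w) ∈ M) : u = v := by
  by_contra h
  exact hM.2 _ hu _ hv (mt Sym2.congr_left.mp h) w (Sym2.mem_mk_right _ _) (Sym2.mem_mk_right _ _)

theorem Covered.exists_mem {M : Set (Sym2 V)} {v : V} (h : Covered M v) : ∃ w, s(v, w) ∈ M := by
  obtain ⟨e, he, hv⟩ := h
  obtain ⟨w, rfl⟩ := Sym2.mem_iff_exists.mp hv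
  exact ⟨w, he⟩

section Finite

variable [Fintype V]

@[simp]
theorem mem_uncov {M : Set (Sym2 V)} {v : V} : v ∈ uncov M ↔ ¬Covered M v := by
  simp [uncov]

@[simp]
theorem mem_NG {G : SimpleGraph V} {S : Finset V} {v : V} :
    v ∈ NG G S ↔ ∃ u ∈ S, G.Adj u v := by
  simp [NG]

@[simp]
theorem mem_NM {M : Set (Sym2 V)} {S : Finset V} {v : V} :
    v ∈ NM M S ↔ ∃ u ∈ S, s(u, v) ∈ M := by
  simp [NM]

theorem disjoint_uncov_NM (M : Set (Sym2 V)) (S : Finset V) : Disjoint (uncov M) (NM M S) := by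
  refine disjoint_left.mpr fun v hv hNM => ?_
  obtain ⟨u, -, hu⟩ := mem_NM.mp hNM
  exact mem_uncov.mp hv ⟨_, hu, Sym2.mem_mk_right u v⟩

theorem card_le_card_NG {G : SimpleGraph V} [DecidableRel G.Adj] {k : ℕ} (hk : 0 < k)
    (hreg : G.IsRegularOfDegree k) (S : Finset V) : #S ≤ #(NG G S) := by
  refine Nat.le_of_mul_le_mul_right (card_mul_le_card_mul G.Adj (fun u hu => ?_) fun v _ => ?_) hk
  · rw [← hreg u]
    refine card_le_card fun w hw => ?_
    have hadj := (G.mem_neighborFinset u w).mp hw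
    exact (mem_bipartiteAbove _).mpr ⟨mem_NG.mpr ⟨u, hu, hadj⟩, hadj⟩
  · rw [← hreg v]
    exact card_le_card fun u hu =>
      (G.mem_neighborFinset v u).mpr ((mem_bipartiteBelow _).mp hu).2.symm

theorem card_le_card_NM {G : SimpleGraph V} {M : Set (Sym2 V)} (hM : IsMatching G M)
    {S : Finset V} (hS : ∀ v ∈ S, Covered M v) : #S ≤ #(NM M S) := by
  have h := card_mul_le_card_mul (fun u v => s(u, v) ∈ M) (m := 1) (n := 1) (s := S)
    (t := NM M S) (fun u hu => ?_) fun v _ => ?_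
  · simpa using h
  · obtain ⟨w, hw⟩ := (hS u hu).exists_mem
    exact card_pos.mpr ⟨w, (mem_bipartiteAbove _).mpr ⟨mem_NM.mpr ⟨u, hu, hw⟩, hw⟩⟩
  · exact card_le_one.mpr fun a ha b hb =>
      hM.eq_of_mem ((mem_bipartiteBelow _).mp ha).2 ((mem_bipartiteBelow _).mp hb).2

end Finite

namespace SimpleGraph.IsBipartiteWith

theorem getElem_mem_right_iff {G : SimpleGraph V} {A B : Set V} (hb : G.IsBipartiteWith A B)
    {p : List V} (hp : p.IsChain G.Adj) {u : V} (hu : u ∈ A) (hhead : p.head? = some u) :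
    ∀ (l : ℕ) (hl : l < p.length), p[l] ∈ B ↔ l % 2 = 1
  | 0, hl => by
    rw [List.head?_eq_getElem?, List.getElem?_eq_getElem hl, Option.some_inj] at hhead
    exact iff_of_false (hhead ▸ Set.disjoint_left.mp hb.disjoint hu) (by omega)
  | l + 1, hl => by
    have ih := getElem_mem_right_iff hb hp hu hhead l (by omega)
    rcases hb.mem_of_adj (List.isChain_iff_getElem.mp hp l hl) with ⟨hA, hB⟩ | ⟨hB, hA⟩
    · have := ih.not.mp (Set.disjoint_left.mp hb.disjoint hA)
      exact iff_of_true hB (by omega)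
    · have := ih.mp hB
      exact iff_of_false (Set.disjoint_left.mp hb.disjoint hA) (by omega)

end SimpleGraph.IsBipartiteWith

/-- Alternation is recorded through the sides of the vertices rather than through positions, so
that it survives cutting out closed subwalks: in a walk of a bipartite graph starting in `A`, the
edges leaving `B` are exactly those at odd positions. -/
def IsAltWalk (G : SimpleGraph V) (M : Set (Sym2 V)) (B : Set V) (p : List V) : Prop :=
  p.IsChain fun x y => G.Adj x y ∧ (s(x, y) ∈ M ↔ x ∈ B)

namespace IsAltWalk

variable {G : SimpleGraph V} {M : Set (Sym2 V)} {A B : Set V} {p : List V} {u v : V}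

theorem append_singleton (hp : IsAltWalk G M B p) (hlast : p.getLast? = some v) {w : V}
    (hadj : G.Adj v w) (hvw : s(v, w) ∈ M ↔ v ∈ B) : IsAltWalk G M B (p ++ [w]) :=
  hp.append (.singleton w) (by simp [hlast, hadj, hvw])

theorem isAugPath_of_nodup (hb : G.IsBipartiteWith A B) (hp : IsAltWalk G M B p)
    (hnd : p.Nodup) (hu : u ∈ A) (hv : v ∈ B) (hhead : p.head? = some u)
    (hlast : p.getLast? = some v) (hcu : ¬Covered M u) (hcv : ¬Covered M v) :
    IsAugPath G M p := by
  have hadj : p.IsChain G.Adj := hp.imp fun _ _ h => h.1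
  have hside := hb.getElem_mem_right_iff hadj hu hhead
  have hpos : 0 < p.length := List.length_pos_iff.mpr (by rintro rfl; simp at hhead)
  have hodd : (p.length - 1) % 2 = 1 := by
    rw [List.getLast?_eq_getElem?, List.getElem?_eq_getElem (by omega), Option.some_inj] at hlast
    exact (hside _ _).mp (hlast ▸ hv)
  refine ⟨hnd, hadj, by omega, by omega, fun l hl => ?_, ?_⟩
  · have hl' : l + 1 < p.length := by simp [pathEdges] at hl; omega
    simp only [pathEdges, List.get_eq_getElem, List.getElem_zipWith, List.getElem_tail]
    exact (List.isChain_iff_getElem.mp hp l hl').2.trans (hside l _)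
  · rintro w (h | h)
    · rwa [← Option.some_inj.mp (hhead.symm.trans h)]
    · rwa [← Option.some_inj.mp (hlast.symm.trans h)]

theorem exists_isAugPath (hb : G.IsBipartiteWith A B) (hp : IsAltWalk G M B p)
    (hu : u ∈ A) (hv : v ∈ B) (hhead : p.head? = some u) (hlast : p.getLast? = some v)
    (hcu : ¬Covered M u) (hcv : ¬Covered M v) :
    ∃ q, IsAugPath G M q ∧ q.length ≤ p.length := by
  obtain ⟨q, hnd, hq, hqhead, hqlast, hlen⟩ := List.IsChain.exists_nodup hp
  exact ⟨q, isAugPath_of_nodup hb hq hnd hu hv (hqhead.trans hhead) (hqlast.trans hlast) hcu hcv,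
    hlen⟩

end IsAltWalk

section Growth

variable [Fintype V] {G : SimpleGraph V} {M : Set (Sym2 V)} {A B : Finset V}

variable (G M A B) in
noncomputable def altReach (n : ℕ) : Finset V :=
  A.filter fun v => ∃ p : List V, IsAltWalk G M ↑B p ∧ p.length ≤ n ∧
    (∃ u ∈ uncov M ∩ A, p.head? = some u) ∧ p.getLast? = some v

theorem altReach_mono : Monotone (altReach G M A B) := by
  intro n n' hnn' v hv
  simp only [altReach, mem_filter] at hv ⊢
  obtain ⟨hvA, p, hp, hlen, hhead, hlast⟩ := hv
  exact ⟨hvA, p, hp, hlen.trans hnn', hhead, hlast⟩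

theorem uncov_inter_subset_altReach {n : ℕ} (hn : 1 ≤ n) :
    uncov M ∩ A ⊆ altReach G M A B n :=
  fun u hu => mem_filter.mpr ⟨(mem_inter.mp hu).2, [u], .singleton u, hn, ⟨u, hu, rfl⟩, rfl⟩

theorem covered_of_mem_NG_altReach (hb : G.IsBipartiteWith ↑A ↑B) {n : ℕ}
    (hno : ∀ q, IsAugPath G M q → n + 1 < q.length) {w : V}
    (hw : w ∈ NG G (altReach G M A B n)) : Covered M w := by
  by_contra hcw
  obtain ⟨v, hv, hvw⟩ := mem_NG.mp hw
  obtain ⟨hvA, p, hp, hlen, ⟨u, hu, hhead⟩, hlast⟩ := mem_filter.mp hv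
  have hvB : v ∉ B := Set.disjoint_left.mp hb.disjoint hvA
  have hvwM : s(v, w) ∉ M := fun h => hcw ⟨_, h, Sym2.mem_mk_right v w⟩
  have hpw := hp.append_singleton hlast hvw (iff_of_false hvwM hvB)
  obtain ⟨q, hq, hqlen⟩ := hpw.exists_isAugPath hb (mem_inter.mp hu).2
    (hb.mem_of_mem_adj hvA hvw) (by simp [hhead]) (by simp) (mem_uncov.mp (mem_inter.mp hu).1) hcw
  have := hno q hq
  simp only [List.length_append, List.length_singleton] at hqlen
  omega

theorem NM_NG_altReach_subset (hb : G.IsBipartiteWith ↑A ↑B) (hM : IsMatching G M) (n : ℕ) :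
    NM M (NG G (altReach G M A B n)) ⊆ altReach G M A B (n + 2) := by
  intro v' hv'
  obtain ⟨w, hw, hwv'⟩ := mem_NM.mp hv'
  obtain ⟨v, hv, hvw⟩ := mem_NG.mp hw
  by_cases hvwM : s(v, w) ∈ M
  · have : v = v' := hM.eq_of_mem (Sym2.eq_swap ▸ hvwM) (Sym2.eq_swap ▸ hwv')
    exact altReach_mono (by omega) (this ▸ hv)
  obtain ⟨hvA, p, hp, hlen, hhead, hlast⟩ := mem_filter.mp hv
  have hvB : v ∉ B := Set.disjoint_left.mp hb.disjoint hvA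
  have hwB : w ∈ B := hb.mem_of_mem_adj hvA hvw
  have hwv'adj : G.Adj w v' := hM.1 hwv'
  have hpw := hp.append_singleton hlast hvw (iff_of_false hvwM hvB)
  have hpwv := hpw.append_singleton (by simp) hwv'adj (iff_of_true hwv' hwB)
  refine mem_filter.mpr ⟨hb.symm.mem_of_mem_adj hwB hwv'adj, _, hpwv, ?_, ?_, by simp⟩
  · simp only [List.length_append, List.length_singleton]
    omega
  · obtain ⟨u, hu, hhead⟩ := hhead
    exact ⟨u, hu, by simp [hhead]⟩

theorem succ_mul_card_le_card_altReach (hb : G.IsBipartiteWith ↑A ↑B) [DecidableRel G.Adj]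
    {k : ℕ} (hk : 0 < k) (hreg : G.IsRegularOfDegree k) (hM : IsMatching G M) {t : ℕ}
    (hno : ∀ q, IsAugPath G M q → 2 * t + 2 < q.length) :
    ∀ i ≤ t, (i + 1) * #(uncov M ∩ A) ≤ #(altReach G M A B (2 * i + 1))
  | 0, _ => by simpa using card_le_card (uncov_inter_subset_altReach le_rfl)
  | i + 1, hi => by
    set R := altReach G M A B (2 * i + 1)
    have hcov : ∀ w ∈ NG G R, Covered M w :=
      fun w => covered_of_mem_NG_altReach hb fun q hq => by have := hno q hq; omega
    have hdisj : Disjoint (uncov M ∩ A) (NM M (NG G R)) :=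
      (disjoint_uncov_NM M _).mono_left inter_subset_left
    have hsub : uncov M ∩ A ∪ NM M (NG G R) ⊆ altReach G M A B (2 * (i + 1) + 1) :=
      union_subset (uncov_inter_subset_altReach (by omega)) (NM_NG_altReach_subset hb hM _)
    calc (i + 1 + 1) * #(uncov M ∩ A)
        = #(uncov M ∩ A) + (i + 1) * #(uncov M ∩ A) := by ring
      _ ≤ #(uncov M ∩ A) + #(NM M (NG G R)) := by
        gcongr
        exact (succ_mul_card_le_card_altReach hb hk hreg hM hno i (by omega)).trans
          ((card_le_card_NG hk hreg R).trans (card_le_card_NM hM hcov))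
      _ = #(uncov M ∩ A ∪ NM M (NG G R)) := (card_union_of_disjoint hdisj).symm
      _ ≤ _ := card_le_card hsub

theorem succ_mul_card_uncov_inter_le (hb : G.IsBipartiteWith ↑A ↑B) [DecidableRel G.Adj]
    {k : ℕ} (hk : 0 < k) (hreg : G.IsRegularOfDegree k) (hM : IsMatching G M) {t : ℕ}
    (hno : ∀ q, IsAugPath G M q → 2 * t + 2 < q.length) :
    (t + 1) * #(uncov M ∩ A) ≤ #A :=
  (succ_mul_card_le_card_altReach hb hk hreg hM hno t le_rfl).trans
    (card_le_card (filter_subset _ _))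

end Growth

theorem le_div_two_add_one_of_mul_le {k m K : ℕ} (hk : 2 ≤ k)
    (h : 2 * k * k * m ≤ (k + 1) * (2 * k + (K - 1))) : m ≤ K / 2 + 1 := by
  by_contra! hm
  have hK : K - 1 ≤ 2 * (K / 2) := by omega
  generalize K / 2 = t at hm hK
  have h' : 2 * k * k * (t + 2) ≤ (k + 1) * (2 * k + 2 * t) :=
    (Nat.mul_le_mul_left _ hm).trans (h.trans (by gcongr))
  nlinarith [Nat.mul_le_mul_right (k * t) hk, Nat.mul_le_mul_right t hk]

theorem card_uncovered_le_general [Fintype V]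
    (G : SimpleGraph V) [DecidableRel G.Adj] (A B : Finset V)
    (hpart : ∀ v : V, v ∈ A ∨ v ∈ B) (hAB : ∀ v : V, ¬(v ∈ A ∧ v ∈ B))
    (hbip : ∀ u v : V, G.Adj u v → (u ∈ A ∧ v ∈ B) ∨ (u ∈ B ∧ v ∈ A))
    (k : ℕ) (hk : 2 ≤ k) (hreg : ∀ v : V, G.degree v = k)
    (m : ℕ)
    (K : ℕ) (hK : K % 2 = 1)
    (hmK : 2 * k * k * m ≤ (k + 1) * (2 * k + (K - 1)))
    (M : Set (Sym2 V)) (hM : IsMatching G M)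
    (hno : ∀ p : List V, IsAugPath G M p → ¬(p.length ≤ K + 1)) :
    m * (uncov M).card ≤ Fintype.card V := by
  have hdisj : Disjoint A B := disjoint_left.mpr fun v hA hB => hAB v ⟨hA, hB⟩
  have hb : G.IsBipartiteWith ↑A ↑B := ⟨disjoint_coe.mpr hdisj, fun u v => hbip u v⟩
  have hno' : ∀ p, IsAugPath G M p → 2 * (K / 2) + 2 < p.length := fun p hp => by
    have := hno p hp
    omega
  have hsplit : #(uncov M) ≤ #(uncov M ∩ A) + #(uncov M ∩ B) := by
    refine (card_le_card fun v hv => ?_).trans (card_union_le _ _)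
    rcases hpart v with h | h <;> simp [hv, h]
  calc m * #(uncov M) ≤ (K / 2 + 1) * (#(uncov M ∩ A) + #(uncov M ∩ B)) :=
        Nat.mul_le_mul (le_div_two_add_one_of_mul_le hk hmK) hsplit
    _ = (K / 2 + 1) * #(uncov M ∩ A) + (K / 2 + 1) * #(uncov M ∩ B) := mul_add _ _ _
    _ ≤ #A + #B := add_le_add (succ_mul_card_uncov_inter_le hb (by omega) hreg hM hno')
        (succ_mul_card_uncov_inter_le hb.symm (by omega) hreg hM hno')
    _ = #(A ∪ B) := (card_union_of_disjoint hdisj).symm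
    _ ≤ Fintype.card V := card_le_univ _

/-- in a finite `k`-regular bipartite graph (`k ≥ 2`), if `K` is odd
with `m ≤ ((k+1)/k)(1 + (K-1)/(2k))` and `M` is a matching with no augmenting
paths of length `≤ K` (edges), then `m·|Y_0| ≤ |V|` where `Y_0` is the set of
`M`-uncovered vertices. -/
theorem card_uncovered_le [Fintype V] [DecidableEq V]
    (G : SimpleGraph V) [DecidableRel G.Adj] (A B : Finset V)
    (hpart : ∀ v : V, v ∈ A ∨ v ∈ B) (hAB : ∀ v : V, ¬(v ∈ A ∧ v ∈ B))
    (hbip : ∀ u v : V, G.Adj u v → (u ∈ A ∧ v ∈ B) ∨ (u ∈ B ∧ v ∈ A))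
    (k : ℕ) (hk : 2 ≤ k) (hreg : ∀ v : V, G.degree v = k)
    (m : ℕ) (hm : 0 < m)
    (K : ℕ) (hK : K % 2 = 1)
    (hmK : 2 * k * k * m ≤ (k + 1) * (2 * k + (K - 1)))
    (M : Set (Sym2 V)) (hM : IsMatching G M)
    (hno : ∀ p : List V, IsAugPath G M p → ¬(p.length ≤ K + 1)) :
    m * (uncov M).card ≤ Fintype.card V :=
  card_uncovered_le_general G A B hpart hAB hbip k hk hreg m K hK hmK M hM hno
end

section
/- Let (M, +, 0) be a commutative monoid with algebraic preorder ≤. Suppose M satisfies the approximate weak cancellation law: whenever k·α ≤ k·β (k ≥ 1), then for every positive integer m there exist α', α'' with α' + α'' = α, p·α' ≤ q·α for some positive integers p, q with m ≤ p/q, and α'' ≤ β. Then for any α with (n+1)·α ≤ n·α for some n ≥ 1, we have 2·α ≤₀ α, i.e., for every m > 0 there is a decomposition 2·α = γ' + γ'' with p·γ' ≤ q·(2·α) for some p/q ≥ m and γ'' ≤ α. -/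
/-! If `(n+1)•α + γ = n•α`, then `n•α` absorbs `α + γ` any number of times, and adding
`j•α` to `n•α + (n+j)•(α + γ) = n•α` gives `(n+j)•(2•α) + (n+j)•γ = (n+j)•α`. So `2•α` is below
`α` after multiplication by any `k ≥ n`, and the cancellation law applied with `k = n + 1`
gives the claim. -/

theorem add_nsmul_eq_self_of_add_eq_self {M : Type*} [AddMonoid M] {a b : M}
    (h : a + b = a) (k : ℕ) : a + k • b = a := by
  induction k with
  | zero => simp
  | succ k ih => rw [succ_nsmul, ← add_assoc, ih, h]

theorem exists_nsmul_two_nsmul_add_eq_of_succ_nsmul_add_eq {M : Type*} [AddCommMonoid M]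
    {α γ : M} {n : ℕ} (h : (n + 1) • α + γ = n • α) {k : ℕ} (hk : n ≤ k) :
    ∃ δ, k • (2 • α) + δ = k • α := by
  obtain ⟨j, rfl⟩ := Nat.exists_eq_add_of_le hk
  have absorb : n • α + (n + j) • (α + γ) = n • α :=
    add_nsmul_eq_self_of_add_eq_self (by rwa [add_nsmul, one_nsmul, add_assoc] at h) _
  refine ⟨(n + j) • γ, ?_⟩
  calc (n + j) • (2 • α) + (n + j) • γ
      = j • α + (n • α + (n + j) • (α + γ)) := by
        rw [nsmul_add, smul_comm, two_nsmul, add_nsmul]; abel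
    _ = (n + j) • α := by rw [absorb, add_nsmul, add_comm]

theorem two_le_zero_of_cancellation_general {M : Type*} [AddCommMonoid M]
    (hcancel : ∀ (k : ℕ), 1 ≤ k → ∀ α β : M,
      (∃ γ, k • α + γ = k • β) →
      ∀ m : ℕ, 0 < m → ∃ α' α'' : M, α' + α'' = α ∧
        (∃ p q : ℕ, 0 < p ∧ 0 < q ∧ m * q ≤ p ∧ ∃ γ, p • α' + γ = q • α) ∧
        (∃ γ, α'' + γ = β))
    (α : M) (n : ℕ)
    (h : ∃ γ, (n + 1) • α + γ = n • α) :
    ∀ m : ℕ, 0 < m → ∃ γ' γ'' : M, γ' + γ'' = 2 • α ∧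
      (∃ p q : ℕ, 0 < p ∧ 0 < q ∧ m * q ≤ p ∧ ∃ δ, p • γ' + δ = q • (2 • α)) ∧
      (∃ δ, γ'' + δ = α) := by
  obtain ⟨γ, hγ⟩ := h
  exact hcancel (n + 1) n.succ_pos (2 • α) α
    (exists_nsmul_two_nsmul_add_eq_of_succ_nsmul_add_eq hγ n.le_succ)

/-- if a commutative monoid satisfies the approximate weak
cancellation law, then `(n+1)·α ≤ n·α` for some `n ≥ 1` implies `2·α ≤₀ α`:
for every `m > 0` there is a splitting `2·α = γ' + γ''` with `p·γ' ≤ q·(2·α)`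
for some positive integers `p, q` with `m ≤ p/q`, and `γ'' ≤ α`. Here `≤` is the
algebraic preorder `x ≤ y ↔ ∃ z, x + z = y`. -/
theorem two_le_zero_of_cancellation {M : Type*} [AddCommMonoid M]
    (hcancel : ∀ (k : ℕ), 1 ≤ k → ∀ α β : M,
      (∃ γ, k • α + γ = k • β) →
      ∀ m : ℕ, 0 < m → ∃ α' α'' : M, α' + α'' = α ∧
        (∃ p q : ℕ, 0 < p ∧ 0 < q ∧ m * q ≤ p ∧ ∃ γ, p • α' + γ = q • α) ∧
        (∃ γ, α'' + γ = β))
    (α : M) (n : ℕ) (hn : 1 ≤ n)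
    (h : ∃ γ, (n + 1) • α + γ = n • α) :
    ∀ m : ℕ, 0 < m → ∃ γ' γ'' : M, γ' + γ'' = 2 • α ∧
      (∃ p q : ℕ, 0 < p ∧ 0 < q ∧ m * q ≤ p ∧ ∃ δ, p • γ' + δ = q • (2 • α)) ∧
      (∃ δ, γ'' + δ = α) :=
  two_le_zero_of_cancellation_general hcancel α n h
end

section
/- Let (M, +, 0) be a commutative monoid with algebraic preorder ≤, let μ : M → [0, ∞] be a monoid homomorphism with μ(α) = 1, and suppose there exist β, γ ∈ M with β + γ = 2·α (so '2α \ γ' makes sense as β), β ≤ α, and 3·γ ≤ 2·α. Then we get a contradiction: μ(β) ≤ 1 while μ(β) = 2 − μ(γ) ≥ 2 − 2/3 > 1. Hence if μ exists with μ(α) = 1, then 2·α ≤₀ α fails. -/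
open scoped ENNReal

theorem map_le_map_of_add_eq {M N F : Type*} [AddCommMonoid M] [AddCommMonoid N] [PartialOrder N]
    [CanonicallyOrderedAdd N] [FunLike F M N] [AddHomClass F M N] (f : F) {a b c : M}
    (h : a + c = b) : f a ≤ f b := by
  rw [← h, map_add]
  exact le_self_add

/-- if `μ : M → [0,∞]` is a monoid homomorphism with `μ α = 1`, and
`β + γ = 2·α` with `β ≤ α` and `3·γ ≤ 2·α` (algebraic preorder), then we reach a
contradiction. -/
theorem no_splitting_of_measure {M : Type*} [AddCommMonoid M]
    (μ : M →+ ℝ≥0∞) (α β γ : M) (hμ : μ α = 1)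
    (hsum : β + γ = 2 • α)
    (hβ : ∃ δ, β + δ = α)
    (hγ : ∃ δ, 3 • γ + δ = 2 • α) : False := by
  obtain ⟨δ, hδ⟩ := hβ
  obtain ⟨ε, hε⟩ := hγ
  have hμβ : μ β ≤ 1 := hμ ▸ map_le_map_of_add_eq μ hδ
  have hμγ : 3 * μ γ ≤ 2 := by
    simpa [map_nsmul, hμ] using map_le_map_of_add_eq μ hε
  have hsplit : μ β + μ γ = 2 := by
    simpa [map_add, map_nsmul, hμ] using congrArg μ hsum
  have : (6 : ℝ≥0∞) ≤ 5 :=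
    calc (6 : ℝ≥0∞) = 3 * (μ β + μ γ) := by rw [hsplit]; norm_num
      _ = 3 * μ β + 3 * μ γ := mul_add _ _ _
      _ ≤ 3 * 1 + 2 := by gcongr
      _ = 5 := by norm_num
  norm_num at this
end

section
/- Let G = (A ⊔ B, E) be a finite k-regular bipartite graph (k ≥ 2) and M a matching with no 1-augmenting paths (equivalently: no edge joins two uncovered vertices). Let Y_0 be the set of uncovered vertices and Y_1 = N_G(Y_0) its neighbourhood. Then every vertex of Y_1 is covered by M, every vertex of Y_1 is adjacent to at most k−1 vertices of Y_0, and (k−1)|Y_1| ≥ k|Y_0|, i.e., |Y_1| ≥ (k/(k−1))|Y_0|. -/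
variable {V : Type*}

open scoped Classical

/-! A neighbour of an uncovered vertex is covered, since no edge joins two uncovered vertices, and
its `M`-partner is a covered neighbour; so it has at most `k - 1` uncovered neighbours. Counting
the edges between `Y₀` and `Y₁` from both sides then gives `k |Y₀| ≤ (k - 1) |Y₁|`. -/

open Finset

section OneAugmentingFree

variable {G : SimpleGraph V} {M : Set (Sym2 V)}

theorem Covered.exists_adj_covered (hMG : M ⊆ G.edgeSet) {v : V} (hv : Covered M v) :
    ∃ w, G.Adj v w ∧ Covered M w := by
  obtain ⟨e, he, hve⟩ := hv
  have hvw : s(v, Sym2.Mem.other hve) ∈ M := (Sym2.other_spec hve).symm ▸ he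
  exact ⟨_, hMG hvw, _, hvw, Sym2.mem_mk_right _ _⟩

variable [Fintype V]

theorem covered_of_mem_NG_uncov (hno1 : ∀ u v : V, G.Adj u v → Covered M u ∨ Covered M v)
    {v : V} (hv : v ∈ NG G (uncov M)) : Covered M v := by
  obtain ⟨u, hu, huv⟩ := (mem_filter.1 hv).2
  exact (hno1 u v huv).resolve_left (mem_filter.1 hu).2

variable [DecidableRel G.Adj]

theorem card_uncov_filter_adj_le_degree_sub_one (hMG : M ⊆ G.edgeSet) {v : V}
    (hv : Covered M v) : #((uncov M).filter fun u => G.Adj v u) ≤ G.degree v - 1 := by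
  obtain ⟨w, hvw, hw⟩ := hv.exists_adj_covered hMG
  have hsub : (uncov M).filter (fun u => G.Adj v u) ⊆ (G.neighborFinset v).erase w := by
    intro u hu
    obtain ⟨hu_uncov, hvu⟩ := mem_filter.1 hu
    exact mem_erase.2
      ⟨fun huw => (mem_filter.1 hu_uncov).2 (huw ▸ hw), (G.mem_neighborFinset v u).2 hvu⟩
  calc #((uncov M).filter fun u => G.Adj v u)
      ≤ #((G.neighborFinset v).erase w) := card_le_card hsub
    _ = G.degree v - 1 := by
      rw [card_erase_of_mem ((G.mem_neighborFinset v w).2 hvw), G.card_neighborFinset_eq_degree]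

theorem bipartiteAbove_NG_eq_neighborFinset {S : Finset V} {u : V} (hu : u ∈ S) :
    (NG G S).bipartiteAbove G.Adj u = G.neighborFinset u := by
  ext v
  simp only [mem_bipartiteAbove, NG, mem_filter, mem_univ, true_and, SimpleGraph.mem_neighborFinset]
  exact ⟨And.right, fun huv => ⟨⟨u, hu, huv⟩, huv⟩⟩

theorem mul_card_le_mul_card_NG {k m : ℕ} (hreg : G.IsRegularOfDegree k) {S : Finset V}
    (hS : ∀ v ∈ NG G S, #(S.filter fun u => G.Adj v u) ≤ m) : k * #S ≤ m * #(NG G S) := by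
  rw [mul_comm k, mul_comm m]
  refine card_mul_le_card_mul G.Adj (fun u hu => ?_) (fun v hv => ?_)
  · rw [bipartiteAbove_NG_eq_neighborFinset hu, G.card_neighborFinset_eq_degree, hreg u]
  · simpa only [bipartiteBelow, G.adj_comm] using hS v hv

end OneAugmentingFree

theorem one_aug_free_counting_general [Fintype V]
    (G : SimpleGraph V) [DecidableRel G.Adj]
    (k : ℕ) (hreg : ∀ v : V, G.degree v = k)
    (M : Set (Sym2 V)) (hM : IsMatching G M)
    (hno1 : ∀ u v : V, G.Adj u v → Covered M u ∨ Covered M v) :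
    (∀ v ∈ NG G (uncov M), Covered M v) ∧
    (∀ v ∈ NG G (uncov M), ((uncov M).filter fun u => G.Adj v u).card ≤ k - 1) ∧
    k * (uncov M).card ≤ (k - 1) * (NG G (uncov M)).card := by
  have hcov : ∀ v ∈ NG G (uncov M), Covered M v := fun v hv => covered_of_mem_NG_uncov hno1 hv
  have hdeg : ∀ v ∈ NG G (uncov M), #((uncov M).filter fun u => G.Adj v u) ≤ k - 1 :=
    fun v hv => hreg v ▸ card_uncov_filter_adj_le_degree_sub_one hM.1 (hcov v hv)
  exact ⟨hcov, hdeg, mul_card_le_mul_card_NG hreg hdeg⟩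

/-- in a finite `k`-regular bipartite graph (`k ≥ 2`), if `M` is a
matching such that no edge joins two uncovered vertices (no 1-augmenting paths),
`Y_0` is the set of uncovered vertices and `Y_1 = N_G(Y_0)`, then every vertex of
`Y_1` is covered, every vertex of `Y_1` has at most `k-1` neighbours in `Y_0`,
and `(k-1)|Y_1| ≥ k|Y_0|`. -/
theorem one_aug_free_counting [Fintype V] [DecidableEq V]
    (G : SimpleGraph V) [DecidableRel G.Adj] (A B : Finset V)
    (hpart : ∀ v : V, v ∈ A ∨ v ∈ B) (hAB : ∀ v : V, ¬(v ∈ A ∧ v ∈ B))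
    (hbip : ∀ u v : V, G.Adj u v → (u ∈ A ∧ v ∈ B) ∨ (u ∈ B ∧ v ∈ A))
    (k : ℕ) (hk : 2 ≤ k) (hreg : ∀ v : V, G.degree v = k)
    (M : Set (Sym2 V)) (hM : IsMatching G M)
    (hno1 : ∀ u v : V, G.Adj u v → Covered M u ∨ Covered M v) :
    (∀ v ∈ NG G (uncov M), Covered M v) ∧
    (∀ v ∈ NG G (uncov M), ((uncov M).filter fun u => G.Adj v u).card ≤ k - 1) ∧
    k * (uncov M).card ≤ (k - 1) * (NG G (uncov M)).card :=
  one_aug_free_counting_general G k hreg M hM hno1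
end

section
/- Let M be a commutative monoid with algebraic preorder ≤, and α ∈ M. Suppose that for every m > 0 there exist γ', γ'' with γ' + γ'' = 2·α, p·γ' ≤ q·(2·α) for some positive integers p, q with p/q ≥ m, and γ'' ≤ α (i.e., 2·α ≤₀ α). Then there is no monoid homomorphism μ : M → [0, ∞] with μ(α) = 1. -/
open scoped ENNReal

/-!
Apply `μ` to the splitting for `m = 3`: `μ γ' + μ γ'' = 2`, while `p • γ' ≤ q • (2 • α)` with
`3 q ≤ p` gives `3 μ γ' ≤ 2` and `γ'' ≤ α` gives `μ γ'' ≤ 1`. Then `6 = 3 (μ γ' + μ γ'') ≤ 5`.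
-/

theorem AddMonoidHom.map_le_map_add {M N : Type*} [AddCommMonoid M] [AddCommMonoid N]
    [PartialOrder N] [CanonicallyOrderedAdd N] (μ : M →+ N) (x δ : M) : μ x ≤ μ (x + δ) :=
  (map_add μ x δ).symm ▸ le_self_add

theorem ENNReal.nat_mul_le_of_mul_le {x y : ℝ≥0∞} {m p q : ℕ} (hq : 0 < q) (hpq : m * q ≤ p)
    (h : (p : ℝ≥0∞) * x ≤ q * y) : (m : ℝ≥0∞) * x ≤ y := by
  have hq' : (q : ℝ≥0∞) ≠ 0 := by exact_mod_cast hq.ne'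
  refine (ENNReal.mul_le_mul_iff_right hq' (ENNReal.natCast_ne_top q)).mp ?_
  calc (q : ℝ≥0∞) * (m * x) = ((m * q : ℕ) : ℝ≥0∞) * x := by push_cast; ring
    _ ≤ p * x := by gcongr
    _ ≤ q * y := h

/-- if `2·α ≤₀ α` in a commutative monoid (for every `m > 0` there
is a splitting `2·α = γ' + γ''` with `p·γ' ≤ q·(2·α)` for some positive `p, q`
with `p/q ≥ m`, and `γ'' ≤ α`, where `≤` is the algebraic preorder), then there
is no monoid homomorphism `μ : M → [0,∞]` with `μ α = 1`. -/
theorem no_measure_of_two_le_zero {M : Type*} [AddCommMonoid M] (α : M)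
    (h : ∀ m : ℕ, 0 < m → ∃ γ' γ'' : M, γ' + γ'' = 2 • α ∧
      (∃ p q : ℕ, 0 < p ∧ 0 < q ∧ m * q ≤ p ∧ ∃ δ, p • γ' + δ = q • (2 • α)) ∧
      (∃ δ, γ'' + δ = α)) :
    ¬ ∃ μ : M →+ ℝ≥0∞, μ α = 1 := by
  rintro ⟨μ, hμ⟩
  obtain ⟨γ', γ'', hsum, ⟨p, q, -, hq, hpq, δ, hδ⟩, ε, hε⟩ := h 3 three_pos
  have hsum' : μ γ' + μ γ'' = 2 := by
    simpa [hμ] using congrArg μ hsum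
  have hγ' : 3 * μ γ' ≤ 2 := by
    refine ENNReal.nat_mul_le_of_mul_le hq hpq ?_
    simpa [hδ, hμ, mul_comm] using μ.map_le_map_add (p • γ') δ
  have hγ'' : μ γ'' ≤ 1 := hμ ▸ hε ▸ μ.map_le_map_add γ'' ε
  have : (6 : ℝ≥0∞) ≤ 5 :=
    calc (6 : ℝ≥0∞) = 3 * (μ γ' + μ γ'') := by rw [hsum']; norm_num
      _ = 3 * μ γ' + 3 * μ γ'' := mul_add _ _ _
      _ ≤ 2 + 3 * 1 := by gcongr
      _ = 5 := by norm_num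
  norm_num at this
end
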